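/- arXiv:1605.04111 — 2 statements merged into one kernel-verified Lean document; each statement's English description precedes it below -/
import Mathlib

section
/- For α ≥ 2, d t_a f_1 > 0, and m'/1' > 1, the equation (m'/1') α d t_a f_1 x^(α+1) + (m'/1')(α−1) x^α − (α d t_a f_1 + α − 1) = 0 has a unique positive solution x, and this solution satisfies (1'/m')^(1/α) ≤ x ≤ (1'/m')^(1/(α+1)). -/
/-- The relative optimal-frequency equation has a unique positive solution, which lies
between (1'/m')^(1/α) and (1'/m')^(1/(α+1)). -/
theorem unique_ratio_with_bounds
    (m' p1 d ta f1 α : ℝ)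
    (hp1 : 0 < p1) (hratio : 1 < m' / p1)
    (hb : 0 < d * ta * f1) (hα : 2 ≤ α) :
    ∃ x : ℝ, (0 < x ∧
        (m' / p1) * α * d * ta * f1 * x ^ (α + 1)
          + (m' / p1) * (α - 1) * x ^ α - (α * d * ta * f1 + α - 1) = 0) ∧
      (∀ y : ℝ, 0 < y →
        (m' / p1) * α * d * ta * f1 * y ^ (α + 1)
          + (m' / p1) * (α - 1) * y ^ α - (α * d * ta * f1 + α - 1) = 0 → y = x) ∧
      (p1 / m') ^ (1 / α) ≤ x ∧ x ≤ (p1 / m') ^ (1 / (α + 1)) := by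
  have hα0 : (0:ℝ) < α := by linarith
  have hα1 : (0:ℝ) < α + 1 := by linarith
  have hC : (0:ℝ) < α - 1 := by linarith
  set r : ℝ := m' / p1 with hrdef
  have hr : 1 < r := hratio
  have hr0 : 0 < r := lt_trans one_pos hr
  have hm' : 0 < m' := by
    have := mul_pos hr0 hp1
    rwa [hrdef, div_mul_cancel₀ _ hp1.ne'] at this
  set q : ℝ := p1 / m' with hqdef
  have hq : 0 < q := div_pos hp1 hm'
  have hq1 : q < 1 := (div_lt_one hm').mpr ((one_lt_div hp1).mp hratio)
  have hqr : q * r = 1 := by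
    rw [hqdef, hrdef]; field_simp
  have hB : 0 < α * d * ta * f1 := by
    have := mul_pos hα0 hb; linarith [this]
  set L : ℝ := q ^ (1 / α) with hLdef
  set U : ℝ := q ^ (1 / (α + 1)) with hUdef
  have hL0 : 0 < L := Real.rpow_pos_of_pos hq _
  have hU0 : 0 < U := Real.rpow_pos_of_pos hq _
  have hL1 : L < 1 := Real.rpow_lt_one hq.le hq1 (by positivity)
  have hU1 : U < 1 := Real.rpow_lt_one hq.le hq1 (by positivity)
  have hLU : L ≤ U :=
    Real.rpow_le_rpow_of_exponent_ge hq hq1.le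
      (one_div_le_one_div_of_le hα0 (by linarith))
  have hLα : L ^ α = q := by
    rw [hLdef, ← Real.rpow_mul hq.le, one_div_mul_cancel hα0.ne', Real.rpow_one]
  have hUα1 : U ^ (α + 1) = q := by
    rw [hUdef, ← Real.rpow_mul hq.le, one_div_mul_cancel hα1.ne', Real.rpow_one]
  have hLα1 : L ^ (α + 1) = q * L := by
    rw [Real.rpow_add hL0, hLα, Real.rpow_one]
  have hUα : U ^ α * U = q := by
    have h := Real.rpow_add hU0 α 1
    rw [Real.rpow_one] at h
    rw [← h, hUα1]
  -- the increasing function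
  set f : ℝ → ℝ := fun t => r * α * d * ta * f1 * t ^ (α + 1) + r * (α - 1) * t ^ α
    with hfdef
  have hmono : ∀ y z : ℝ, 0 < y → y < z → f y < f z := by
    intro y z hy hyz
    have h1 : y ^ (α + 1) < z ^ (α + 1) := Real.rpow_lt_rpow hy.le hyz hα1
    have h2 : y ^ α < z ^ α := Real.rpow_lt_rpow hy.le hyz hα0
    have hrB : 0 < r * α * d * ta * f1 := by
      have := mul_pos hr0 hB; linarith [this]
    have hrC : 0 < r * (α - 1) := mul_pos hr0 hC
    simp only [hfdef]
    linarith [mul_lt_mul_of_pos_left h1 hrB, mul_lt_mul_of_pos_left h2 hrC]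
  have hcont : ContinuousOn f (Set.Icc L U) := by
    have h1 : ContinuousOn (fun t : ℝ => t ^ (α + 1)) (Set.Icc L U) := fun t _ =>
      (Real.continuousAt_rpow_const t (α + 1) (Or.inr hα1.le)).continuousWithinAt
    have h2 : ContinuousOn (fun t : ℝ => t ^ α) (Set.Icc L U) := fun t _ =>
      (Real.continuousAt_rpow_const t α (Or.inr hα0.le)).continuousWithinAt
    exact (continuousOn_const.mul h1).add (continuousOn_const.mul h2)
  -- values at endpoints
  have hfL : f L = α * d * ta * f1 * L + (α - 1) := by
    simp only [hfdef]
    rw [hLα1, hLα]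
    linear_combination (α * d * ta * f1 * L + (α - 1)) * hqr
  have hfU : f U = α * d * ta * f1 + r * (α - 1) * U ^ α := by
    simp only [hfdef]
    rw [hUα1]
    linear_combination (α * d * ta * f1) * hqr
  have hfLle : f L ≤ α * d * ta * f1 + α - 1 := by
    rw [hfL]
    have h := mul_le_mul_of_nonneg_left hL1.le hB.le
    rw [mul_one] at h
    linarith
  have hfUge : α * d * ta * f1 + α - 1 ≤ f U := by
    rw [hfU]
    have h2' : r * (α - 1) * U ^ α * U = α - 1 := by
      linear_combination r * (α - 1) * hUα + (α - 1) * hqr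
    have hT : 0 < r * (α - 1) * U ^ α :=
      mul_pos (mul_pos hr0 hC) (Real.rpow_pos_of_pos hU0 α)
    have h := mul_le_mul_of_nonneg_left hU1.le hT.le
    rw [mul_one] at h
    linarith
  -- IVT
  obtain ⟨x, hxmem, hfx⟩ :=
    intermediate_value_Icc hLU hcont ⟨hfLle, hfUge⟩
  obtain ⟨hxL, hxU⟩ := hxmem
  have hx0 : 0 < x := lt_of_lt_of_le hL0 hxL
  have hxeq : r * α * d * ta * f1 * x ^ (α + 1) + r * (α - 1) * x ^ α
      - (α * d * ta * f1 + α - 1) = 0 := by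
    have : f x = α * d * ta * f1 + α - 1 := hfx
    simp only [hfdef] at this
    linarith
  refine ⟨x, ⟨hx0, hxeq⟩, ?_, hxL, hxU⟩
  intro y hy hyeq
  have hfy : f y = α * d * ta * f1 + α - 1 := by
    simp only [hfdef]; linarith
  rcases lt_trichotomy y x with h | h | h
  · exfalso
    have := hmono y x hy h
    rw [hfy, hfx] at this
    exact lt_irrefl _ this
  · exact h
  · exfalso
    have := hmono x y hx0 h
    rw [hfy, hfx] at this
    exact lt_irrefl _ this
end

section
/- If f = (f_1,...,f_M) with all f_m > 0 satisfies, for every pair m ≥ n with w_m, w_n > 0, the relation (m'(α−1+α d t_a f_m))^(1/α) f_m = (n'(α−1+α d t_a f_n))^(1/α) f_n, then f_m ≤ f_n; i.e., the optimal frequency is nonincreasing in the number of active cores. -/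
/-- The optimality relation forces the optimal frequency to be nonincreasing in the
effective number of active cores: if m' ≥ n' and
(m'(α−1+α d t_a f_m))^(1/α) f_m = (n'(α−1+α d t_a f_n))^(1/α) f_n, then f_m ≤ f_n. -/
theorem optimal_frequency_nonincreasing
    (m' n' d ta α fm fn : ℝ)
    (hn' : 0 < n') (hnm : n' ≤ m') (hd : 0 ≤ d) (hta : 0 ≤ ta) (hα : 2 ≤ α)
    (hfm : 0 < fm) (hfn : 0 < fn)
    (hrel : (m' * (α - 1 + α * d * ta * fm)) ^ (1 / α) * fm
          = (n' * (α - 1 + α * d * ta * fn)) ^ (1 / α) * fn) :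
    fm ≤ fn := by
  by_contra h
  push_neg at h
  have hα0 : (0:ℝ) < α := by linarith
  have hαd : 0 ≤ α * d * ta := by positivity
  have hbn : 0 < α - 1 + α * d * ta * fn := by nlinarith [mul_nonneg hαd hfn.le]
  have hbm : α - 1 + α * d * ta * fn ≤ α - 1 + α * d * ta * fm := by
    nlinarith [mul_le_mul_of_nonneg_left h.le hαd]
  have hbase : n' * (α - 1 + α * d * ta * fn) ≤ m' * (α - 1 + α * d * ta * fm) := by
    nlinarith
  have hpow : (n' * (α - 1 + α * d * ta * fn)) ^ (1 / α)
      ≤ (m' * (α - 1 + α * d * ta * fm)) ^ (1 / α) :=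
    Real.rpow_le_rpow (by positivity) hbase (by positivity)
  have hposm : 0 < (m' * (α - 1 + α * d * ta * fm)) ^ (1 / α) :=
    Real.rpow_pos_of_pos (by nlinarith) _
  have := mul_lt_mul' hpow h hfn.le hposm
  linarith [hrel]
end
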